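/- arXiv:2107.02595 — 3 statements merged into one kernel-verified Lean document; each statement's English description precedes it below -/
import Mathlib

section
/- Let W be a diagonal m×m matrix with positive diagonal entries and R ∈ ℝ^{(n−1)×m} with full row rank. Then (R^†)ᵀ W^{−1} R^† ⪰ (R W Rᵀ)^{−1}, where R^† = Rᵀ(RRᵀ)^{−1} is the Moore–Penrose pseudoinverse of R. -/
/-!
`R†` is a right inverse of `R`. For every right inverse `X` of `R`, completing the square around
the weighted right inverse `W Rᴴ (R W Rᴴ)⁻¹` writes `Xᴴ W⁻¹ X - (R W Rᴴ)⁻¹` as the Gram matrix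
`Mᴴ W⁻¹ M` with `M = X - W Rᴴ (R W Rᴴ)⁻¹`, which is positive semidefinite since `W⁻¹` is
(the Gauss–Markov argument).
-/

open Matrix

namespace Matrix

variable {K : Type*} [Field K] [StarRing K] {m k : Type*}
  [Fintype m] [DecidableEq m] [Fintype k] [DecidableEq k]

theorem conjTranspose_mul_inv_mul_sub_inv_eq {W : Matrix m m K} (hW : W.IsHermitian)
    (hWdet : IsUnit W.det) {R : Matrix k m K} (hRWR : IsUnit (R * W * Rᴴ).det)
    {X : Matrix m k K} (hX : R * X = 1) :
    Xᴴ * W⁻¹ * X - (R * W * Rᴴ)⁻¹ =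
      (X - W * Rᴴ * (R * W * Rᴴ)⁻¹)ᴴ * W⁻¹ * (X - W * Rᴴ * (R * W * Rᴴ)⁻¹) := by
  set B := (R * W * Rᴴ)⁻¹
  have hB : Bᴴ = B := (isHermitian_mul_mul_conjTranspose R hW).inv
  have hXB : Xᴴ * (Rᴴ * B) = B := by
    rw [← Matrix.mul_assoc, ← conjTranspose_mul, hX, conjTranspose_one, Matrix.one_mul]
  have hBX : B * (R * X) = B := by rw [hX, Matrix.mul_one]
  have hBRWRB : B * (R * (W * (Rᴴ * B))) = B := by
    rw [show B * (R * (W * (Rᴴ * B))) = B * (R * W * Rᴴ) * B by simp only [Matrix.mul_assoc],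
      nonsing_inv_mul _ hRWR, Matrix.one_mul]
  simp only [conjTranspose_sub, conjTranspose_mul, conjTranspose_conjTranspose, hB, hW.eq,
    Matrix.sub_mul, Matrix.mul_sub, Matrix.mul_assoc, nonsing_inv_mul_cancel_left _ _ hWdet,
    mul_nonsing_inv_cancel_left _ _ hWdet, hXB, hBX, hBRWRB]
  abel

theorem posSemidef_conjTranspose_mul_inv_mul_sub_inv [PartialOrder K] {W : Matrix m m K}
    (hW : W.PosDef) {R : Matrix k m K} (hRWR : IsUnit (R * W * Rᴴ).det) {X : Matrix m k K}
    (hX : R * X = 1) :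
    (Xᴴ * W⁻¹ * X - (R * W * Rᴴ)⁻¹).PosSemidef := by
  have hWdet : IsUnit W.det := (isUnit_iff_isUnit_det W).mp hW.isUnit
  rw [conjTranspose_mul_inv_mul_sub_inv_eq hW.isHermitian hWdet hRWR hX]
  exact hW.inv.posSemidef.conjTranspose_mul_mul_same _

end Matrix

/-- For `W` diagonal positive and `R` of full row rank, with `R† = Rᵀ(RRᵀ)⁻¹`,
`(R†)ᵀ W⁻¹ R† ⪰ (R W Rᵀ)⁻¹` in the Loewner order. -/
theorem stmt9 {n m : ℕ} (R : Matrix (Fin (n - 1)) (Fin m) ℝ)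
    (hR : ∀ x : Fin (n - 1) → ℝ, R.vecMul x = 0 → x = 0)
    (w : Fin m → ℝ) (hw : ∀ i, 0 < w i) :
    let W : Matrix (Fin m) (Fin m) ℝ := Matrix.diagonal w
    let Rdag : Matrix (Fin m) (Fin (n - 1)) ℝ := Rᵀ * (R * Rᵀ)⁻¹
    (Rdagᵀ * W⁻¹ * Rdag - (R * W * Rᵀ)⁻¹).PosSemidef := by
  intro W Rdag
  have hW : W.PosDef := posDef_diagonal_iff.mpr hw
  have hRinj : Function.Injective R.vecMul := fun x y hxy =>
    sub_eq_zero.mp (hR _ (by rw [sub_vecMul]; exact sub_eq_zero.mpr hxy))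
  have hRWR : (R * W * Rᴴ).PosDef := hW.mul_mul_conjTranspose_same hRinj
  have hRR : (R * Rᴴ).PosDef := PosDef.mul_conjTranspose_self R hRinj
  have hRdag : R * Rdag = 1 := by
    rw [← Matrix.mul_assoc, ← conjTranspose_eq_transpose_of_trivial,
      mul_nonsing_inv _ ((isUnit_iff_isUnit_det _).mp hRR.isUnit)]
  simpa only [conjTranspose_eq_transpose_of_trivial] using
    posSemidef_conjTranspose_mul_inv_mul_sub_inv hW
      ((isUnit_iff_isUnit_det _).mp hRWR.isUnit) hRdag
end

section
/- Let W be diagonal with positive entries and R have full row rank. Then −RWRᵀ + RRᵀ(RW^{−1}Rᵀ)^{−1}RRᵀ ⪯ 0. -/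
/-!
The block matrix `[[W⁻¹, 1], [1, W]]` is positive semidefinite, its Schur complement
`W - W⁻¹⁻¹` being zero. Conjugating by `diag(R, R)` gives the positive semidefinite block matrix
`[[RW⁻¹Rᴴ, RRᴴ], [RRᴴ, RWRᴴ]]`, and as `RW⁻¹Rᴴ` is positive definite, its Schur complement
`RWRᴴ - RRᴴ(RW⁻¹Rᴴ)⁻¹RRᴴ` is positive semidefinite as well.
-/

open Matrix

namespace Matrix

variable {K : Type*} [Field K] [PartialOrder K] [StarRing K] [StarOrderedRing K]
  {m n : Type*} [Fintype m] [Fintype n] [DecidableEq m] [DecidableEq n]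

theorem PosDef.posSemidef_fromBlocks_inv_one_one_self {W : Matrix m m K} (hW : W.PosDef) :
    (fromBlocks W⁻¹ 1 1 W).PosSemidef := by
  have : Invertible W := hW.isUnit.invertible
  have h := hW.inv.fromBlocks₁₁ (1 : Matrix m m K) W
  rw [conjTranspose_one, inv_inv_of_invertible] at h
  rw [h, Matrix.one_mul, Matrix.mul_one, sub_self]
  exact .zero

theorem PosDef.posSemidef_sub_mul_inv_mul {W : Matrix m m K} (hW : W.PosDef)
    (R : Matrix n m K) (hS : (R * W⁻¹ * Rᴴ).PosDef) :
    (R * W * Rᴴ - R * Rᴴ * (R * W⁻¹ * Rᴴ)⁻¹ * (R * Rᴴ)).PosSemidef := by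
  have : Invertible (R * W⁻¹ * Rᴴ) := hS.isUnit.invertible
  have hconj : fromBlocks R 0 0 R * fromBlocks W⁻¹ 1 1 W * (fromBlocks R 0 0 R)ᴴ =
      fromBlocks (R * W⁻¹ * Rᴴ) (R * Rᴴ) (R * Rᴴ)ᴴ (R * W * Rᴴ) := by
    simp [fromBlocks_conjTranspose, fromBlocks_multiply, Matrix.mul_assoc]
  have hblock := hW.posSemidef_fromBlocks_inv_one_one_self.mul_mul_conjTranspose_same
    (fromBlocks R 0 0 R)
  rw [hconj, hS.fromBlocks₁₁] at hblock
  simpa only [conjTranspose_mul, conjTranspose_conjTranspose] using hblock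

end Matrix

/-- For `W` diagonal positive and `R` of full row rank,
`−RWRᵀ + RRᵀ(RW⁻¹Rᵀ)⁻¹RRᵀ ⪯ 0` (negative semidefinite). -/
theorem stmt11 {n m : ℕ} (R : Matrix (Fin (n - 1)) (Fin m) ℝ)
    (hR : ∀ x : Fin (n - 1) → ℝ, R.vecMul x = 0 → x = 0)
    (w : Fin m → ℝ) (hw : ∀ i, 0 < w i) :
    let W : Matrix (Fin m) (Fin m) ℝ := Matrix.diagonal w
    (-(-(R * W * Rᵀ) + R * Rᵀ * (R * W⁻¹ * Rᵀ)⁻¹ * (R * Rᵀ))).PosSemidef := by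
  intro W
  have hW : W.PosDef := posDef_diagonal_iff.mpr hw
  have hRinj : Function.Injective R.vecMul := fun x y hxy =>
    sub_eq_zero.mp (hR (x - y) (by rw [sub_vecMul]; exact sub_eq_zero.mpr hxy))
  have h := hW.posSemidef_sub_mul_inv_mul R (hW.inv.mul_mul_conjTranspose_same hRinj)
  rw [conjTranspose_eq_transpose_of_trivial] at h
  rwa [neg_add, neg_neg, ← sub_eq_add_neg]
end

section
/- Let L be positive definite of size (n−1), R ∈ ℝ^{(n−1)×m} with full row rank, and W diagonal positive definite of size m. Set X = W^{1/2}Rᵀ(RWRᵀ L RWRᵀ)^{−1}RW^{1/2} and X₁ = W^{−1/2}R^† L^{−1} (R^†)ᵀ W^{−1/2} with R^† = Rᵀ(RRᵀ)^{−1}. Then λ_max(X₁) ≥ λ_max(X). -/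
/-!
Write `L⁻¹ = Cᵀ C`, `A = (R W Rᵀ)⁻¹ R W^{1/2}` and `B = (R Rᵀ)⁻¹ R W^{-1/2}`, so that
`X = (C A)ᵀ (C A)` and `X₁ = (C B)ᵀ (C B)`. Both `A Bᵀ` and `A Aᵀ` equal `(R W Rᵀ)⁻¹`, hence
`B Bᵀ - A Aᵀ = (B - A)(B - A)ᵀ ⪰ 0`, which is the Loewner inequality
`(R†)ᵀ W⁻¹ R† ⪰ (R W Rᵀ)⁻¹`. Since `Mᵀ M` and `M Mᵀ` have the same nonzero eigenvalues,
`λ_max X = λ_max (C A Aᵀ Cᵀ) ≤ λ_max (C B Bᵀ Cᵀ) = λ_max X₁`.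
-/

open Matrix

noncomputable def maxEig {n : Type*} [Fintype n] [DecidableEq n] (A : Matrix n n ℝ) : ℝ :=
  sSup (spectrum ℝ A)

open scoped MatrixOrder

-- `sSup ∅ = 0` in `ℝ`, so this also covers `s ⊆ {0}`.
lemma Real.sSup_sdiff_zero {s : Set ℝ} (hs : BddAbove s) (h0 : ∀ x ∈ s, 0 ≤ x) :
    sSup (s \ {0}) = sSup s := by
  have h0' : ∀ x ∈ s \ {0}, 0 ≤ x := fun x hx => h0 x hx.1
  refine le_antisymm (Real.sSup_le (fun x hx => le_csSup hs hx.1) (Real.sSup_nonneg h0)) ?_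
  refine Real.sSup_le (fun x hx => ?_) (Real.sSup_nonneg h0')
  rcases eq_or_ne x 0 with rfl | hx0
  · exact Real.sSup_nonneg h0'
  · exact le_csSup (hs.mono Set.sdiff_subset) ⟨hx, hx0⟩

lemma Matrix.spectrum_nonzero_mul_comm {K k l : Type*} [Field K] [Fintype k] [DecidableEq k]
    [Fintype l] [DecidableEq l] (A : Matrix k l K) (B : Matrix l k K) :
    spectrum K (A * B) \ {0} = spectrum K (B * A) \ {0} := by
  ext μ
  simp only [Set.mem_sdiff, Set.mem_singleton_iff, mem_spectrum_iff_isRoot_charpoly,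
    and_congr_left_iff, Polynomial.IsRoot.def]
  intro hμ
  have := congrArg (Polynomial.eval μ) (charpoly_mul_comm' A B)
  simp only [Polynomial.eval_mul, Polynomial.eval_pow, Polynomial.eval_X] at this
  constructor <;> intro h <;> simp_all

section MaxEig

variable {k l : Type*} [Fintype k] [DecidableEq k] [Fintype l] [DecidableEq l]

lemma maxEig_le_iff [Nonempty k] {M : Matrix k k ℝ} (hM : M.IsHermitian) {r : ℝ} :
    maxEig M ≤ r ↔ M ≤ algebraMap ℝ _ r := by
  have hne : (spectrum ℝ M).Nonempty := by
    rw [hM.spectrum_real_eq_range_eigenvalues]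
    exact Set.range_nonempty _
  rw [maxEig, csSup_le_iff M.finite_spectrum.bddAbove hne,
    le_algebraMap_iff_spectrum_le hM.isSelfAdjoint]

lemma maxEig_mono {M₁ M₂ : Matrix k k ℝ} (h₁ : M₁.IsHermitian) (h₂ : M₂.IsHermitian)
    (h : M₁ ≤ M₂) : maxEig M₁ ≤ maxEig M₂ := by
  cases isEmpty_or_nonempty k
  · rw [Subsingleton.elim M₁ M₂]
  · exact (maxEig_le_iff h₁).2 (h.trans ((maxEig_le_iff h₂).1 le_rfl))

lemma Matrix.PosSemidef.maxEig_eq_sSup_spectrum_sdiff_zero {M : Matrix k k ℝ}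
    (hM : M.PosSemidef) : maxEig M = sSup (spectrum ℝ M \ {0}) :=
  (Real.sSup_sdiff_zero M.finite_spectrum.bddAbove fun _ hx =>
    spectrum_nonneg_of_nonneg hM.nonneg hx).symm

lemma maxEig_mul_transpose_self (M : Matrix k l ℝ) : maxEig (M * Mᵀ) = maxEig (Mᵀ * M) := by
  have h₁ : (M * Mᵀ).PosSemidef := by simpa using posSemidef_self_mul_conjTranspose M
  have h₂ : (Mᵀ * M).PosSemidef := by simpa using posSemidef_conjTranspose_mul_self M
  rw [h₁.maxEig_eq_sSup_spectrum_sdiff_zero, h₂.maxEig_eq_sSup_spectrum_sdiff_zero,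
    spectrum_nonzero_mul_comm]

end MaxEig

lemma mul_transpose_self_le_of_mul_transpose_eq {k l : Type*} [Fintype k] [Fintype l]
    {A B : Matrix k l ℝ} (h : A * Bᵀ = A * Aᵀ) : A * Aᵀ ≤ B * Bᵀ := by
  have h' : B * Aᵀ = A * Aᵀ := by simpa using congrArg transpose h
  have hdiff : B * Bᵀ - A * Aᵀ = (B - A) * (B - A)ᵀ := by
    rw [transpose_sub, Matrix.sub_mul, Matrix.mul_sub, Matrix.mul_sub, h, h']
    abel
  rw [Matrix.le_iff, hdiff]
  simpa using posSemidef_self_mul_conjTranspose (B - A)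

lemma maxEig_transpose_mul_mul_le {k l : Type*} [Fintype k] [DecidableEq k] [Fintype l]
    [DecidableEq l] {P : Matrix k k ℝ} (hP : P.PosSemidef) {A B : Matrix k l ℝ}
    (h : A * Bᵀ = A * Aᵀ) : maxEig (Aᵀ * P * A) ≤ maxEig (Bᵀ * P * B) := by
  obtain ⟨C, rfl⟩ := CStarAlgebra.nonneg_iff_eq_star_mul_self.mp hP.nonneg
  have hsq (D : Matrix k l ℝ) : Dᵀ * (star C * C) * D = (C * D)ᵀ * (C * D) := by
    simp [star_eq_conjTranspose, transpose_mul, Matrix.mul_assoc]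
  have hconj (D : Matrix k l ℝ) : C * D * (C * D)ᵀ = C * (D * Dᵀ) * star C := by
    simp [star_eq_conjTranspose, transpose_mul, Matrix.mul_assoc]
  rw [hsq, hsq, ← maxEig_mul_transpose_self, ← maxEig_mul_transpose_self]
  refine maxEig_mono ?_ ?_ ?_
  · simpa using isHermitian_mul_conjTranspose_self (C * A)
  · simpa using isHermitian_mul_conjTranspose_self (C * B)
  · rw [hconj, hconj]
    exact star_right_conjugate_le_conjugate (mul_transpose_self_le_of_mul_transpose_eq h) C

-- Both sides equal `(R S Sᵀ Rᵀ)⁻¹`.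
lemma weighted_mul_transpose_eq {k l : Type*} [Fintype k] [DecidableEq k] [Fintype l]
    [DecidableEq l] {R : Matrix k l ℝ} {S T : Matrix l l ℝ} (hST : S * Tᵀ = 1)
    (hG : IsUnit (R * S * Sᵀ * Rᵀ).det) (hH : IsUnit (R * Rᵀ).det) :
    (R * S * Sᵀ * Rᵀ)⁻¹ * (R * S) * ((R * Rᵀ)⁻¹ * (R * T))ᵀ
      = (R * S * Sᵀ * Rᵀ)⁻¹ * (R * S) * ((R * S * Sᵀ * Rᵀ)⁻¹ * (R * S))ᵀ := by
  set G := R * S * Sᵀ * Rᵀ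
  set H := R * Rᵀ
  have hAB : G⁻¹ * (R * S) * (H⁻¹ * (R * T))ᵀ = G⁻¹ := by
    have hHT : Hᵀ = H := by rw [transpose_mul, transpose_transpose]
    calc _ = G⁻¹ * (R * (S * Tᵀ) * Rᵀ) * H⁻¹ := by
          simp only [transpose_mul, transpose_nonsing_inv, hHT, Matrix.mul_assoc]
      _ = G⁻¹ := by rw [hST, Matrix.mul_one, mul_nonsing_inv_cancel_right _ _ hH]
  have hAA : G⁻¹ * (R * S) * (G⁻¹ * (R * S))ᵀ = G⁻¹ := by
    have hGT : Gᵀ = G := by simp only [G, transpose_mul, transpose_transpose, Matrix.mul_assoc]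
    calc _ = G⁻¹ * G * G⁻¹ := by
          rw [transpose_mul, transpose_nonsing_inv, hGT]
          simp only [G, transpose_mul, Matrix.mul_assoc]
      _ = G⁻¹ := by rw [nonsing_inv_mul _ hG, Matrix.one_mul]
  rw [hAB, hAA]

/-- For `L` positive definite, `R` of full row rank, and `W` diagonal positive definite, with
`X = W^{1/2}Rᵀ(RWRᵀ L RWRᵀ)⁻¹RW^{1/2}` and `X₁ = W^{-1/2}R† L⁻¹ (R†)ᵀ W^{-1/2}` where
`R† = Rᵀ(RRᵀ)⁻¹`, we have `λ_max(X₁) ≥ λ_max(X)`. -/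
theorem stmt18 {n m : ℕ} (L : Matrix (Fin (n - 1)) (Fin (n - 1)) ℝ) (hL : L.PosDef)
    (R : Matrix (Fin (n - 1)) (Fin m) ℝ)
    (hR : ∀ x : Fin (n - 1) → ℝ, R.vecMul x = 0 → x = 0)
    (w : Fin m → ℝ) (hw : ∀ i, 0 < w i) :
    let W : Matrix (Fin m) (Fin m) ℝ := Matrix.diagonal w
    let Ws : Matrix (Fin m) (Fin m) ℝ := Matrix.diagonal fun i => Real.sqrt (w i)
    let Wis : Matrix (Fin m) (Fin m) ℝ := Matrix.diagonal fun i => (Real.sqrt (w i))⁻¹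
    let Rdag : Matrix (Fin m) (Fin (n - 1)) ℝ := Rᵀ * (R * Rᵀ)⁻¹
    let X : Matrix (Fin m) (Fin m) ℝ :=
      Ws * Rᵀ * (R * W * Rᵀ * L * (R * W * Rᵀ))⁻¹ * (R * Ws)
    let X₁ : Matrix (Fin m) (Fin m) ℝ := Wis * Rdag * L⁻¹ * Rdagᵀ * Wis
    maxEig X ≤ maxEig X₁ := by
  intro W Ws Wis Rdag X X₁
  have hRinj : Function.Injective R.vecMul := (injective_iff_map_eq_zero (vecMulLinear R)).2 hR
  have hWsT : Wsᵀ = Ws := diagonal_transpose _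
  have hGW : R * Ws * Wsᵀ * Rᵀ = R * W * Rᵀ := by
    rw [Matrix.mul_assoc R, hWsT, diagonal_mul_diagonal]
    simp only [W, Real.mul_self_sqrt (hw _).le]
  have hWs : Ws * Wisᵀ = 1 := by
    simp [Ws, Wis, diagonal_mul_diagonal, (Real.sqrt_pos.2 (hw _)).ne']
  set G := R * W * Rᵀ
  set H := R * Rᵀ
  have hG : G.PosDef := by simpa using (PosDef.diagonal hw).mul_mul_conjTranspose_same hRinj
  have hH : H.PosDef := by simpa using PosDef.one.mul_mul_conjTranspose_same hRinj
  have hX : X = (G⁻¹ * (R * Ws))ᵀ * L⁻¹ * (G⁻¹ * (R * Ws)) := by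
    change Ws * Rᵀ * (G * L * G)⁻¹ * (R * Ws) = _
    rw [transpose_mul, transpose_nonsing_inv, show Gᵀ = G by simpa using hG.1.eq, transpose_mul,
      hWsT, Matrix.mul_inv_rev, Matrix.mul_inv_rev]
    simp only [Matrix.mul_assoc]
  have hX₁ : X₁ = (H⁻¹ * (R * Wis))ᵀ * L⁻¹ * (H⁻¹ * (R * Wis)) := by
    change Wis * (Rᵀ * H⁻¹) * L⁻¹ * (Rᵀ * H⁻¹)ᵀ * Wis = _
    simp only [transpose_mul, transpose_nonsing_inv, show Hᵀ = H by simpa using hH.1.eq,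
      show Wisᵀ = Wis from diagonal_transpose _, transpose_transpose, Matrix.mul_assoc]
  have hAB := weighted_mul_transpose_eq hWs (hGW ▸ isUnit_iff_ne_zero.2 hG.det_pos.ne')
    (isUnit_iff_ne_zero.2 hH.det_pos.ne')
  rw [hGW] at hAB
  rw [hX, hX₁]
  exact maxEig_transpose_mul_mul_le hL.inv.posSemidef hAB
end
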